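/- arXiv:2012.03687 — 2 statements merged into one kernel-verified Lean document; each statement's English description precedes it below -/
import Mathlib

section
/- Let H ∈ ℂ^{K×N} and define Q* = max over z ∈ ℂ^N with |z_n| = 1 for all n of ‖Hz‖². Let λ₁ be the largest eigenvalue of H^H H and v₁ a corresponding unit eigenvector. Then λ₁ ‖v₁‖₁² ≤ Q* ≤ N λ₁, where ‖v₁‖₁ = ∑_n |[v₁]_n|. -/
/-!
The upper bound is the Rayleigh-quotient bound `zᴴ Hᴴ H z ≤ λ₁ ‖z‖²` at a unit-modulus maximiser,
for which `‖z‖² = N`. For the lower bound, test the phase vector `z = exp (i arg v₁)`: as `Hᴴ H` is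
positive semidefinite with unit eigenvector `v₁`, `‖H z‖² ≥ λ₁ |v₁ᴴ z|²`, and `v₁ᴴ z = ‖v₁‖₁`.
-/

open Matrix
open scoped ComplexOrder ComplexConjugate

namespace Matrix

variable {m n 𝕜 : Type*} [Fintype m] [Fintype n] [RCLike 𝕜]

lemma star_dotProduct_self_eq_sum_norm_sq (x : n → 𝕜) :
    star x ⬝ᵥ x = ((∑ i, ‖x i‖ ^ 2 : ℝ) : 𝕜) := by
  simp [dotProduct, RCLike.conj_mul]

lemma star_dotProduct_conjTranspose_mul_self_mulVec (A : Matrix m n 𝕜) (x : n → 𝕜) :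
    star x ⬝ᵥ (Aᴴ * A) *ᵥ x = ((∑ i, ‖(A *ᵥ x) i‖ ^ 2 : ℝ) : 𝕜) := by
  rw [← mulVec_mulVec, dotProduct_mulVec, ← star_mulVec, star_dotProduct_self_eq_sum_norm_sq]

/-- Expanding `0 ≤ (z - c v)ᴴ A (z - c v)` with `c = vᴴ z` leaves exactly `zᴴ A z - λ |c|²`. -/
lemma PosSemidef.eigenvalue_mul_norm_sq_dotProduct_le {A : Matrix n n 𝕜} (hA : A.PosSemidef)
    {lam : ℝ} {v : n → 𝕜} (hv : A *ᵥ v = (lam : 𝕜) • v) (hv1 : star v ⬝ᵥ v = 1) (z : n → 𝕜) :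
    lam * ‖star v ⬝ᵥ z‖ ^ 2 ≤ RCLike.re (star z ⬝ᵥ A *ᵥ z) := by
  set c := star v ⬝ᵥ z
  have hvz : star v ⬝ᵥ A *ᵥ z = lam * c := by
    rw [dotProduct_mulVec, ← hA.isHermitian.eq, ← star_mulVec, hv, star_smul, RCLike.star_def,
      RCLike.conj_ofReal, smul_dotProduct, smul_eq_mul]
  have hzv : star z ⬝ᵥ A *ᵥ v = lam * star c := by
    rw [hv, dotProduct_smul, smul_eq_mul, ← star_dotProduct_star, star_star]
  have hvv : star v ⬝ᵥ A *ᵥ v = lam := by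
    rw [hv, dotProduct_smul, hv1, smul_eq_mul, mul_one]
  have hexpand : star (z - c • v) ⬝ᵥ A *ᵥ (z - c • v) =
      star z ⬝ᵥ A *ᵥ z - lam * ((‖c‖ ^ 2 : ℝ) : 𝕜) := by
    simp only [star_sub, star_smul, mulVec_sub, mulVec_smul, sub_dotProduct, dotProduct_sub,
      smul_dotProduct, dotProduct_smul, hvz, hzv, hvv, smul_eq_mul, RCLike.ofReal_pow,
      ← RCLike.mul_conj, RCLike.star_def]
    ring
  have hnonneg := hA.re_dotProduct_nonneg (z - c • v)
  rw [hexpand, map_sub, ← RCLike.ofReal_mul, RCLike.ofReal_re] at hnonneg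
  linarith

end Matrix

namespace Complex

lemma conj_mul_exp_arg_mul_I (x : ℂ) : conj x * exp (arg x * I) = ‖x‖ := by
  nth_rw 1 [← norm_mul_exp_arg_mul_I x]
  rw [map_mul, conj_ofReal, mul_assoc, conj_mul', norm_exp_ofReal_mul_I]
  simp

lemma star_dotProduct_exp_arg_mul_I {n : Type*} [Fintype n] (v : n → ℂ) :
    star v ⬝ᵥ (fun i ↦ exp (arg (v i) * I)) = ((∑ i, ‖v i‖ : ℝ) : ℂ) := by
  push_cast
  exact Finset.sum_congr rfl fun i _ ↦ conj_mul_exp_arg_mul_I (v i)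

end Complex

/-- Bounds on `Q* = max_{|z_n|=1} ‖Hz‖²`: `λ₁‖v₁‖₁² ≤ Q* ≤ Nλ₁`, where `λ₁` is the
largest eigenvalue of `HᴴH` and `v₁` a corresponding unit eigenvector. -/
theorem unit_modulus_max_bounds {K N : ℕ}
    (H : Matrix (Fin K) (Fin N) ℂ) (lam : ℝ) (v1 : Fin N → ℂ)
    (heig : (Hᴴ * H).mulVec v1 = (lam : ℂ) • v1)
    (hunit : ∑ n, ‖v1 n‖ ^ 2 = 1)
    (hmax : ∀ z : Fin N → ℂ,
      (star z ⬝ᵥ (Hᴴ * H).mulVec z).re ≤ lam * ∑ n, ‖z n‖ ^ 2)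
    (Q : ℝ)
    (hQ : IsGreatest {q : ℝ | ∃ z : Fin N → ℂ, (∀ n, ‖z n‖ = 1) ∧
        q = ∑ k, ‖H.mulVec z k‖ ^ 2} Q) :
    lam * (∑ n, ‖v1 n‖) ^ 2 ≤ Q ∧ Q ≤ N * lam := by
  have hnormSq (z : Fin N → ℂ) : (star z ⬝ᵥ (Hᴴ * H) *ᵥ z).re = ∑ k, ‖(H *ᵥ z) k‖ ^ 2 := by
    rw [star_dotProduct_conjTranspose_mul_self_mulVec]
    exact RCLike.ofReal_re (K := ℂ) _
  constructor
  · have hv1 : star v1 ⬝ᵥ v1 = 1 := by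
      rw [star_dotProduct_self_eq_sum_norm_sq, hunit, RCLike.ofReal_one]
    let z0 n := Complex.exp (Complex.arg (v1 n) * Complex.I)
    calc lam * (∑ n, ‖v1 n‖) ^ 2 = lam * ‖star v1 ⬝ᵥ z0‖ ^ 2 := by
          rw [Complex.star_dotProduct_exp_arg_mul_I, Complex.norm_real,
            Real.norm_of_nonneg (by positivity)]
      _ ≤ (star z0 ⬝ᵥ (Hᴴ * H) *ᵥ z0).re :=
          (posSemidef_conjTranspose_mul_self H).eigenvalue_mul_norm_sq_dotProduct_le heig hv1 z0
      _ ≤ Q := hQ.2 ⟨z0, fun n ↦ Complex.norm_exp_ofReal_mul_I _, hnormSq z0⟩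
  · obtain ⟨z, hz, rfl⟩ := hQ.1
    calc ∑ k, ‖(H *ᵥ z) k‖ ^ 2 = (star z ⬝ᵥ (Hᴴ * H) *ᵥ z).re := (hnormSq z).symm
      _ ≤ lam * ∑ n, ‖z n‖ ^ 2 := hmax z
      _ = N * lam := by simp [hz, mul_comm]
end

section
/- For independent random variables e_1, …, e_N each uniform on [−π/2^b, π/2^b] and nonnegative reals l_1, …, l_N, E[|∑_{n=1}^N l_n e^{j e_n}|²] = ∑_n l_n² + (2^{2b}/π²) sin²(π/2^b) · ∑_{n≠i} l_n l_i, and in particular E[|∑_n l_n e^{j e_n}|²] ≥ (2^{2b}/π²) sin²(π/2^b) · (∑_n l_n)². -/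
/-!
Expanding the square, `|∑ lₙ e^{i eₙ}|² = ∑_{n,m} lₙ lₘ cos (eₙ - eₘ)`. For `n ≠ m`, independence
gives `E cos (eₙ - eₘ) = (E cos e)² + (E sin e)²`, which for the uniform law on `[-a, a]` is
`(sin a / a)² = c`; the diagonal terms have `cos 0 = 1`. Since `c ≤ 1`, the result
`∑ lₙ² + c ∑_{n≠m} lₙ lₘ = (1 - c) ∑ lₙ² + c (∑ lₙ)²` is at least `c (∑ lₙ)²`.
-/

open MeasureTheory ProbabilityTheory Real ComplexConjugate

section Sums

variable {ι : Type*} [Fintype ι] [DecidableEq ι]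

theorem Fintype.sum_prod_ite_fst_eq_snd {M : Type*} [AddCommMonoid M] (f : ι → ι → M) :
    ∑ p : ι × ι, (if p.1 = p.2 then f p.1 p.2 else 0) = ∑ i, f i i := by
  simp [Fintype.sum_prod_type]

theorem sq_sum_eq_sum_sq_add_sum_offDiag {R : Type*} [CommSemiring R] (l : ι → R) :
    (∑ i, l i) ^ 2 = ∑ i, l i ^ 2 + ∑ p : ι × ι, if p.1 ≠ p.2 then l p.1 * l p.2 else 0 :=
  calc (∑ i, l i) ^ 2 = ∑ p : ι × ι, l p.1 * l p.2 := by
        rw [sq, Finset.sum_mul_sum, Fintype.sum_prod_type' (fun i j => l i * l j)]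
    _ = ∑ p : ι × ι, ((if p.1 = p.2 then l p.1 * l p.2 else 0) +
          if p.1 ≠ p.2 then l p.1 * l p.2 else 0) :=
        Finset.sum_congr rfl fun p _ => by by_cases h : p.1 = p.2 <;> simp [h]
    _ = _ := by
        rw [Finset.sum_add_distrib, Fintype.sum_prod_ite_fst_eq_snd (fun i j => l i * l j)]
        simp only [sq]

theorem mul_sq_sum_le_sum_sq_add_mul_sum_offDiag {R : Type*} [CommRing R] [LinearOrder R]
    [IsStrictOrderedRing R] (l : ι → R) {c : R} (hc : c ≤ 1) :
    c * (∑ i, l i) ^ 2 ≤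
      ∑ i, l i ^ 2 + c * ∑ p : ι × ι, if p.1 ≠ p.2 then l p.1 * l p.2 else 0 := by
  have hdiag : 0 ≤ (1 - c) * ∑ i, l i ^ 2 :=
    mul_nonneg (sub_nonneg.2 hc) (Finset.sum_nonneg fun i _ => sq_nonneg (l i))
  rw [sq_sum_eq_sum_sq_add_sum_offDiag]
  linear_combination hdiag

end Sums

theorem norm_sum_ofReal_mul_exp_sq {ι : Type*} [Fintype ι] (l x : ι → ℝ) :
    ‖∑ n, (l n : ℂ) * Complex.exp (Complex.I * x n)‖ ^ 2 =
      ∑ p : ι × ι, l p.1 * l p.2 * cos (x p.1 - x p.2) := by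
  have hterm : ∀ i j, ((l i : ℂ) * Complex.exp (Complex.I * x i) *
      conj ((l j : ℂ) * Complex.exp (Complex.I * x j))).re = l i * l j * cos (x i - x j) := by
    intro i j
    rw [map_mul, Complex.conj_ofReal, ← Complex.exp_conj, map_mul, Complex.conj_I,
      Complex.conj_ofReal, mul_mul_mul_comm, ← Complex.exp_add, ← Complex.ofReal_mul,
      show Complex.I * x i + -Complex.I * x j = ((x i - x j : ℝ) : ℂ) * Complex.I by
        push_cast; ring,
      Complex.re_ofReal_mul, Complex.exp_ofReal_mul_I_re]
  rw [Complex.sq_norm, ← Complex.ofReal_re (Complex.normSq _), ← Complex.mul_conj, map_sum,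
    Finset.sum_mul_sum, Complex.re_sum, Fintype.sum_prod_type]
  simp only [Complex.re_sum, hterm]

section Independent

variable {ι : Type*} [Fintype ι] (μ : Measure ℝ) [IsProbabilityMeasure μ]

theorem integral_mul_comp_eval_of_ne {i j : ι} (hij : i ≠ j) {f g : ℝ → ℝ}
    (hf : Measurable f) (hg : Measurable g) :
    ∫ x : ι → ℝ, f (x i) * g (x j) ∂Measure.pi (fun _ => μ) = (∫ t, f t ∂μ) * ∫ t, g t ∂μ := by
  have hindep : IndepFun (fun x : ι → ℝ => x i) (fun x => x j) (Measure.pi fun _ => μ) :=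
    (iIndepFun_pi (X := fun _ => id) fun _ => aemeasurable_id).indepFun hij
  rw [hindep.integral_fun_comp_mul_comp (measurable_pi_apply i).aemeasurable
      (measurable_pi_apply j).aemeasurable hf.aestronglyMeasurable hg.aestronglyMeasurable,
    integral_comp_eval hf.aestronglyMeasurable, integral_comp_eval hg.aestronglyMeasurable]

theorem integral_cos_sub_eval_of_ne {i j : ι} (hij : i ≠ j) :
    ∫ x : ι → ℝ, cos (x i - x j) ∂Measure.pi (fun _ => μ) =
      (∫ t, cos t ∂μ) ^ 2 + (∫ t, sin t ∂μ) ^ 2 := by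
  have hint : ∀ f : ℝ → ℝ, Continuous f → (∀ t, |f t| ≤ 1) →
      Integrable (fun x : ι → ℝ => f (x i) * f (x j)) (Measure.pi fun _ => μ) := fun f hf hb =>
    Integrable.of_bound (by fun_prop) 1 (ae_of_all _ fun x => by
      simpa [abs_mul] using mul_le_one₀ (hb _) (abs_nonneg _) (hb _))
  simp_rw [cos_sub]
  rw [integral_add (hint cos continuous_cos abs_cos_le_one) (hint sin continuous_sin abs_sin_le_one),
    integral_mul_comp_eval_of_ne μ hij measurable_cos measurable_cos,
    integral_mul_comp_eval_of_ne μ hij measurable_sin measurable_sin, sq, sq]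

theorem integral_norm_sum_ofReal_mul_exp_sq [DecidableEq ι] (l : ι → ℝ) :
    ∫ x, ‖∑ n, (l n : ℂ) * Complex.exp (Complex.I * x n)‖ ^ 2 ∂Measure.pi (fun _ => μ) =
      ∑ n, l n ^ 2 + ((∫ t, cos t ∂μ) ^ 2 + (∫ t, sin t ∂μ) ^ 2) *
        ∑ p : ι × ι, if p.1 ≠ p.2 then l p.1 * l p.2 else 0 := by
  set c := (∫ t, cos t ∂μ) ^ 2 + (∫ t, sin t ∂μ) ^ 2
  have hint : ∀ p : ι × ι, Integrable (fun x : ι → ℝ => l p.1 * l p.2 * cos (x p.1 - x p.2))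
      (Measure.pi fun _ => μ) := fun p =>
    (Integrable.of_bound (by fun_prop) 1
      (ae_of_all _ fun x => by simpa using abs_cos_le_one _)).const_mul _
  have hterm : ∀ p : ι × ι,
      ∫ x : ι → ℝ, l p.1 * l p.2 * cos (x p.1 - x p.2) ∂Measure.pi (fun _ => μ) =
        (if p.1 = p.2 then l p.1 * l p.2 else 0) + c * if p.1 ≠ p.2 then l p.1 * l p.2 else 0 := by
    intro p
    rw [integral_const_mul]
    by_cases h : p.1 = p.2
    · simp [h]
    · simp [h, integral_cos_sub_eval_of_ne μ h, c, mul_comm]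
  simp_rw [norm_sum_ofReal_mul_exp_sq]
  rw [integral_finsetSum _ fun p _ => hint p]
  simp_rw [hterm]
  rw [Finset.sum_add_distrib, ← Finset.mul_sum,
    Fintype.sum_prod_ite_fst_eq_snd (fun i j => l i * l j)]
  simp only [sq]

end Independent

section UniformIcc

theorem isProbabilityMeasure_cond_Icc {lo hi : ℝ} (h : lo < hi) :
    IsProbabilityMeasure (volume[|Set.Icc lo hi]) :=
  cond_isProbabilityMeasure_of_finite (by simp [h]) measure_Icc_lt_top.ne

theorem integral_cond_Icc {lo hi : ℝ} (h : lo ≤ hi) (f : ℝ → ℝ) :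
    ∫ x, f x ∂volume[|Set.Icc lo hi] = (hi - lo)⁻¹ * ∫ x in lo..hi, f x := by
  rw [ProbabilityTheory.cond, integral_smul_measure, integral_Icc_eq_integral_Ioc,
    ← intervalIntegral.integral_of_le h, ENNReal.toReal_inv, Real.volume_Icc,
    ENNReal.toReal_ofReal (sub_nonneg.2 h), smul_eq_mul]

theorem integral_cos_cond_Icc_neg {a : ℝ} (ha : 0 < a) :
    ∫ x, cos x ∂volume[|Set.Icc (-a) a] = sin a / a := by
  rw [integral_cond_Icc (by linarith), integral_cos, sin_neg]
  field_simp

theorem integral_sin_cond_Icc_neg {a : ℝ} (ha : 0 ≤ a) :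
    ∫ x, sin x ∂volume[|Set.Icc (-a) a] = 0 := by
  rw [integral_cond_Icc (by linarith), integral_sin, cos_neg, sub_self, mul_zero]

end UniformIcc

theorem quantized_coherent_sum_power_general (b : ℕ) {N : ℕ}
    (l : Fin N → ℝ) :
    let I : Set ℝ := Set.Icc (-(π / 2 ^ b)) (π / 2 ^ b)
    let μ : Measure ℝ := (volume I)⁻¹ • volume.restrict I
    let c : ℝ := 2 ^ (2 * b) / π ^ 2 * Real.sin (π / 2 ^ b) ^ 2
    (∫ x : Fin N → ℝ, ‖∑ n, (l n : ℂ) * Complex.exp (Complex.I * x n)‖ ^ 2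
        ∂(Measure.pi fun _ => μ) =
      ∑ n, l n ^ 2 + c * ∑ p : Fin N × Fin N, if p.1 ≠ p.2 then l p.1 * l p.2 else 0) ∧
    (∫ x : Fin N → ℝ, ‖∑ n, (l n : ℂ) * Complex.exp (Complex.I * x n)‖ ^ 2
        ∂(Measure.pi fun _ => μ) ≥ c * (∑ n, l n) ^ 2) := by
  intro I μ c
  set a := π / 2 ^ b
  have ha : 0 < a := by positivity
  have : IsProbabilityMeasure μ := isProbabilityMeasure_cond_Icc (neg_lt_self ha)
  have hc : c = (sin a / a) ^ 2 := by
    simp only [c, a]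
    field_simp
    ring
  have hchar : (∫ t, cos t ∂μ) ^ 2 + (∫ t, sin t ∂μ) ^ 2 = c := by
    rw [show μ = volume[|I] from rfl, integral_cos_cond_Icc_neg ha,
      integral_sin_cond_Icc_neg ha.le, hc]
    ring
  have hc_le_one : c ≤ 1 := by
    rw [hc, div_pow, div_le_one (by positivity), sq_le_sq]
    exact abs_sin_le_abs
  rw [integral_norm_sum_ofReal_mul_exp_sq, hchar]
  exact ⟨rfl, mul_sq_sum_le_sum_sq_add_mul_sum_offDiag l hc_le_one⟩

/-- For independent `e_1,…,e_N` uniform on `[−π/2^b, π/2^b]` and nonnegative `l_n`,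
`E[|∑_n l_n e^{je_n}|²] = ∑_n l_n² + c ∑_{n≠i} l_n l_i` with
`c = (2^{2b}/π²) sin²(π/2^b)`, and consequently `E[…] ≥ c (∑_n l_n)²`. -/
theorem quantized_coherent_sum_power (b : ℕ) (hb : 0 < b) {N : ℕ}
    (l : Fin N → ℝ) (hl : ∀ n, 0 ≤ l n) :
    let I : Set ℝ := Set.Icc (-(π / 2 ^ b)) (π / 2 ^ b)
    let μ : Measure ℝ := (volume I)⁻¹ • volume.restrict I
    let c : ℝ := 2 ^ (2 * b) / π ^ 2 * Real.sin (π / 2 ^ b) ^ 2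
    (∫ x : Fin N → ℝ, ‖∑ n, (l n : ℂ) * Complex.exp (Complex.I * x n)‖ ^ 2
        ∂(Measure.pi fun _ => μ) =
      ∑ n, l n ^ 2 + c * ∑ p : Fin N × Fin N, if p.1 ≠ p.2 then l p.1 * l p.2 else 0) ∧
    (∫ x : Fin N → ℝ, ‖∑ n, (l n : ℂ) * Complex.exp (Complex.I * x n)‖ ^ 2
        ∂(Measure.pi fun _ => μ) ≥ c * (∑ n, l n) ^ 2) :=
  quantized_coherent_sum_power_general b l
end
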